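/- Let m ≥ 4 be even and z ≥ 1 an integer, and set a_{2i−1} = 1 and a_{2i} = z for i = 1, …, m/2. Then for the elimination procedures on the list (a₁, a₂, …, a_m, a₁) (removing a non-endpoint element y with current neighbours x, z′ costs 2·x·y·z′, and the final three-element list (a₁, b, a₁) costs 2·a₁·b): (i) the sequential procedure which always removes the second element has total payment 2·(m−1)·z, and (ii) there exists an elimination procedure (namely, first removing all elements equal to z, then proceeding sequentially) with total payment m·z + m − 2. -/
import Mathlib


/-- `ElimCost l c` holds iff there is an elimination procedure on the list `l`
with total payment `c`: while the list has more than 3 elements, some element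
`y` other than the first or the last one is removed, paying `2*x*y*z` where
`x` and `z` are its current left and right neighbours; when exactly three
elements `(x, b, z)` remain, `2*x*b` is paid and the procedure stops. -/
inductive ElimCost : List ℕ → ℕ → Prop
  | base (x b z : ℕ) : ElimCost [x, b, z] (2 * x * b)
  | step (p q : List ℕ) (x y z c : ℕ) :
      ElimCost (p ++ x :: z :: q) c →
      ElimCost (p ++ x :: y :: z :: q) (2 * x * y * z + c)

/-- The total payment of the sequential elimination procedure, which always
removes the second element of the current list, and finally pays `2 * x * b`
for the remaining three-element list `(x, b, z)`. -/
def seqCost : List ℕ → ℕ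
  | x :: y :: z :: w :: rest => 2 * x * y * z + seqCost (x :: z :: w :: rest)
  | [x, b, _] => 2 * x * b
  | _ => 0

/-- The alternating list `[1, z, 1, z, …, 1]` with `k` copies of `z`. -/
def Lalt (z : ℕ) : ℕ → List ℕ
  | 0 => [1]
  | k+1 => 1 :: z :: Lalt z k

lemma Lalt_cons_ex (z k : ℕ) : ∃ t, Lalt z k = 1 :: t := by
  cases k <;> exact ⟨_, rfl⟩

lemma Lalt_snoc (z k : ℕ) : Lalt z (k+1) = Lalt z k ++ [z, 1] := by
  induction k with
  | zero => rfl
  | succ k ih =>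
    show 1 :: z :: Lalt z (k+1) = Lalt z (k+1) ++ [z, 1]
    conv_lhs => rw [ih]
    rfl

lemma map_eq (z : ℕ) (a : ℕ → ℕ) :
    ∀ k, (∀ i, 1 ≤ i → i ≤ k → a (2*i-1) = 1 ∧ a (2*i) = z) →
    (List.range (2*k)).map (fun i => a (i+1)) ++ [1] = Lalt z k := by
  intro k
  induction k with
  | zero => intro _; rfl
  | succ k ih =>
    intro ha
    have h1 : a (2*k+1) = 1 := by
      have := (ha (k+1) (by omega) le_rfl).1
      have e : 2*(k+1) - 1 = 2*k+1 := by omega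
      rwa [e] at this
    have h2 : a (2*k+2) = z := by
      have := (ha (k+1) (by omega) le_rfl).2
      have e : 2*(k+1) = 2*k+2 := by omega
      rwa [e] at this
    have e : 2*(k+1) = (2*k+1)+1 := by omega
    rw [e, List.range_succ, List.range_succ, Lalt_snoc,
      ← ih (fun i h1 h2 => ha i h1 (by omega))]
    simp [h1, h2]

lemma seq_val (z : ℕ) : ∀ k, seqCost (Lalt z (k+1)) = 2*(2*k+1)*z := by
  intro k
  induction k with
  | zero => simp [Lalt, seqCost]
  | succ k ih =>
    obtain ⟨t, ht⟩ := Lalt_cons_ex z k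
    have h2 : Lalt z (k+2) = 1 :: z :: 1 :: z :: 1 :: t := by simp [Lalt, ht]
    have h3 : (1 : ℕ) :: z :: 1 :: t = Lalt z (k+1) := by simp [Lalt, ht]
    rw [h2, seqCost, seqCost, h3, ih]
    ring

lemma elim_ones : ∀ n, ElimCost (List.replicate (n+3) 1) (2*(n+1)) := by
  intro n
  induction n with
  | zero =>
    have := ElimCost.base 1 1 1
    simpa using this
  | succ n ih =>
    have h := ElimCost.step [] (List.replicate (n+1) 1) 1 1 1 (2*(n+1)) (by
      simpa [List.replicate_succ] using ih)
    have e : List.replicate (n+4) 1 = [] ++ 1 :: 1 :: 1 :: List.replicate (n+1) 1 := by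
      simp [List.replicate_succ]
    rw [show n+1+3 = n+4 by omega, e]
    convert h using 1
    ring

lemma elim_z (z : ℕ) : ∀ k p c, ElimCost (p ++ List.replicate (k+1) 1) c →
    ElimCost (p ++ Lalt z k) (2*z*k + c) := by
  intro k
  induction k with
  | zero => intro p c h; simpa [Lalt] using h
  | succ k ih =>
    intro p c h
    obtain ⟨t, ht⟩ := Lalt_cons_ex z k
    have h1 : ElimCost ((p ++ [1]) ++ Lalt z k) (2*z*k + c) := by
      apply ih
      have e : (p ++ [1]) ++ List.replicate (k+1) 1 = p ++ List.replicate (k+2) 1 := by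
        simp [List.replicate_succ]
      rw [e]; exact h
    have h2 : ElimCost (p ++ 1 :: 1 :: t) (2*z*k + c) := by
      have e : (p ++ [1]) ++ Lalt z k = p ++ 1 :: 1 :: t := by simp [ht]
      rwa [e] at h1
    have h3 := ElimCost.step p t 1 z 1 (2*z*k + c) h2
    have e2 : p ++ 1 :: z :: 1 :: t = p ++ Lalt z (k+1) := by simp [Lalt, ht]
    rw [e2] at h3
    convert h3 using 1
    ring

/-- For even `m ≥ 4`, `z ≥ 1` and the alternating sizes `a (2i-1) = 1`,
`a (2i) = z`, the sequential procedure on the list `(a 1, …, a m, a 1)` pays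
`2 * (m - 1) * z`, while some elimination procedure pays only `m * z + m - 2`. -/
theorem stmt_1 (m z : ℕ) (hm : 4 ≤ m) (heven : Even m) (hz : 1 ≤ z)
    (a : ℕ → ℕ)
    (ha : ∀ i : ℕ, 1 ≤ i → i ≤ m / 2 → a (2 * i - 1) = 1 ∧ a (2 * i) = z) :
    seqCost ((List.range m).map (fun i => a (i + 1)) ++ [a 1]) = 2 * (m - 1) * z ∧
    ElimCost ((List.range m).map (fun i => a (i + 1)) ++ [a 1]) (m * z + m - 2) := by
  obtain ⟨r, hr⟩ := heven
  have hdiv : m / 2 = r := by omega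
  obtain ⟨k, hk⟩ : ∃ k, r = k + 2 := ⟨r - 2, by omega⟩
  have hm2 : m = 2 * r := by omega
  have ha' : ∀ i, 1 ≤ i → i ≤ r → a (2*i-1) = 1 ∧ a (2*i) = z := by
    intro i h1 h2; exact ha i h1 (by omega)
  have a1 : a 1 = 1 := by
    have := (ha' 1 le_rfl (by omega)).1
    simpa using this
  have hL : (List.range m).map (fun i => a (i + 1)) ++ [a 1] = Lalt z r := by
    rw [a1, hm2]
    exact map_eq z a r ha'
  rw [hL]
  constructor
  · rw [hk, show k + 2 = (k+1) + 1 from rfl, seq_val]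
    have : m - 1 = 2*(k+1)+1 := by omega
    rw [this]
  · have h1 := elim_ones k
    have h2 := elim_z z (k+2) [] (2*(k+1)) (by simpa using h1)
    have e : m * z + m - 2 = 2*z*(k+2) + 2*(k+1) := by
      have : m = 2*k+4 := by omega
      subst this
      ring_nf
      omega
    rw [e, hk]
    simpa using h2
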